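/- Stuckness modulo substitution: let N, P be closed terms with P ≲ N. If M[N/z] gets stuck (reduces to a normal form that is not a value), then M[P/z] either diverges or gets stuck. -/

import Mathlib

/-!
If `M[P/z]` reaches a value then so does `M[N/z]`; since reduction is deterministic, a term
that reaches a value cannot get stuck, which gives the theorem.

To compare the two reductions, relate `A` to `B` when `B` arises from `A` by putting `N` in
place of some subterms that are reducts of `P`. Closedness of `P` and `N` makes this relation
stable under substitution, so every step of `A` is matched by finitely many steps of `B`.
Whenever a redex of `A` needs a value at a replaced position, that value is a normal form
reached by `P`, and `P ≲ N` lets `N` reduce to it as well.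
-/

namespace PCF

/-- Terms of the simple CBV, PCF-like language.  Variables are natural numbers. -/
inductive Tm : Type
  | var : ℕ → Tm
  | zero : Tm
  | succ : Tm → Tm
  | pred : Tm → Tm
  | ifz : Tm → Tm → Tm → Tm
  | abs : ℕ → Tm → Tm
  | app : Tm → Tm → Tm
  | fix : ℕ → Tm → Tm
  | pair : Tm → Tm → Tm
  | lett : ℕ → ℕ → Tm → Tm → Tm
  deriving DecidableEq

/-- The numeral `succ^n(zero)`. -/
def numeral : ℕ → Tm
  | 0 => .zero
  | n + 1 => .succ (numeral n)

/-- Values. -/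
inductive IsValue : Tm → Prop
  | var (x : ℕ) : IsValue (.var x)
  | num (n : ℕ) : IsValue (numeral n)
  | pair {V W : Tm} : IsValue V → IsValue W → IsValue (.pair V W)
  | abs (x : ℕ) (M : Tm) : IsValue (.abs x M)

/-- Capture-permitting substitution `M[N/x]` (adequate since we only ever
substitute closed terms). -/
def subst (x : ℕ) (N : Tm) : Tm → Tm
  | .var y => if y = x then N else .var y
  | .zero => .zero
  | .succ M => .succ (subst x N M)
  | .pred M => .pred (subst x N M)
  | .ifz M P Q => .ifz (subst x N M) (subst x N P) (subst x N Q)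
  | .abs y M => if y = x then .abs y M else .abs y (subst x N M)
  | .app M P => .app (subst x N M) (subst x N P)
  | .fix y M => if y = x then .fix y M else .fix y (subst x N M)
  | .pair M P => .pair (subst x N M) (subst x N P)
  | .lett y z M P =>
      .lett y z (subst x N M) (if y = x ∨ z = x then P else subst x N P)

/-- Free variables. -/
def fv : Tm → Finset ℕ
  | .var y => {y}
  | .zero => ∅
  | .succ M => fv M
  | .pred M => fv M
  | .ifz M P Q => fv M ∪ fv P ∪ fv Q
  | .abs y M => fv M \ {y}
  | .app M P => fv M ∪ fv P
  | .fix y M => fv M \ {y}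
  | .pair M P => fv M ∪ fv P
  | .lett y z M P => fv M ∪ (fv P \ {y, z})

def ClosedTm (M : Tm) : Prop := fv M = ∅

/-- One-step call-by-value reduction (closure of the redex rules under
evaluation contexts). -/
inductive Step : Tm → Tm → Prop
  | ifz_zero {N P : Tm} : Step (.ifz (numeral 0) N P) N
  | ifz_succ {n : ℕ} {N P : Tm} : Step (.ifz (numeral (n + 1)) N P) P
  | lett_beta {x y : ℕ} {V W M : Tm} : IsValue V → IsValue W →
      Step (.lett x y (.pair V W) M) (subst y W (subst x V M))
  | fix_step {x : ℕ} {M : Tm} : Step (.fix x M) (subst x (.fix x M) M)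
  | pred_zero : Step (.pred (numeral 0)) (numeral 0)
  | pred_succ {n : ℕ} : Step (.pred (numeral (n + 1))) (numeral n)
  | beta {x : ℕ} {M V : Tm} : IsValue V → Step (.app (.abs x M) V) (subst x V M)
  | succ_ctx {M M' : Tm} : Step M M' → Step (.succ M) (.succ M')
  | pred_ctx {M M' : Tm} : Step M M' → Step (.pred M) (.pred M')
  | pair_left {M M' N : Tm} : Step M M' → Step (.pair M N) (.pair M' N)
  | pair_right {V N N' : Tm} : IsValue V → Step N N' → Step (.pair V N) (.pair V N')
  | lett_ctx {x y : ℕ} {M M' N : Tm} : Step M M' → Step (.lett x y M N) (.lett x y M' N)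
  | ifz_ctx {M M' N P : Tm} : Step M M' → Step (.ifz M N P) (.ifz M' N P)
  | app_right {x : ℕ} {M N N' : Tm} : Step N N' →
      Step (.app (.abs x M) N) (.app (.abs x M) N')
  | app_left {M M' N : Tm} : Step M M' → Step (.app M N) (.app M' N)

/-- Many-step reduction. -/
def Steps : Tm → Tm → Prop := Relation.ReflTransGen Step

def NormalForm (M : Tm) : Prop := ¬ ∃ N, Step M N

def Evaluates (M : Tm) : Prop := ∃ V, Steps M V ∧ IsValue V

/-- `M` diverges: it has no normal form. -/
def Diverges (M : Tm) : Prop := ¬ ∃ N, Steps M N ∧ NormalForm N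

def Stuck (M : Tm) : Prop := NormalForm M ∧ ¬ IsValue M

def GoesWrong (M : Tm) : Prop := ∃ P, Steps M P ∧ Stuck P

/-- `div` = `fix x. x`. -/
def divTm : Tm := .fix 0 (.var 0)

/-- `P ≲ N`: if `P` reduces to a normal form then `N` reduces to the same
normal form. -/
def RefBelow (P N : Tm) : Prop := ∀ R, Steps P R → NormalForm R → Steps N R

/-- Fixpoint approximants. -/
def fixApprox (x : ℕ) (M : Tm) : ℕ → Tm
  | 0 => divTm
  | n + 1 => subst x (fixApprox x M n) M

/-- Finitely verifiable types. -/
inductive FTy : Type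
  | nat : FTy
  | prod : FTy → FTy → FTy
  deriving DecidableEq

/-- Types: `Nat | A×B | A→B | A⇝F | Ok` (necessity arrows only to finitely
verifiable types). -/
inductive Ty : Type
  | nat : Ty
  | prod : Ty → Ty → Ty
  | arrow : Ty → Ty → Ty
  | narrow : Ty → FTy → Ty
  | ok : Ty
  deriving DecidableEq

/-- Inclusion of finitely verifiable types into types. -/
def FTy.toTy : FTy → Ty
  | .nat => .nat
  | .prod A B => .prod A.toTy B.toTy

/-- `T⟦·⟧` applied to a set of values: the terms that evaluate into it. -/
def TSem (Sv : Tm → Prop) (M : Tm) : Prop :=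
  ClosedTm M ∧ ∃ V, Steps M V ∧ IsValue V ∧ Sv V

/-- `T̄⟦·⟧`: evaluate into the set, or diverge. -/
def TBarSem (Sv : Tm → Prop) (M : Tm) : Prop :=
  TSem Sv M ∨ (ClosedTm M ∧ Diverges M)

/-- Semantics of finitely verifiable types. -/
def FSem : FTy → Tm → Prop
  | .nat => fun M => ∃ n, M = numeral n
  | .prod A B => fun M => ∃ V W, M = .pair V W ∧ FSem A V ∧ FSem B W

/-- Semantics of types, as sets of closed values. -/
def Sem : Ty → Tm → Prop
  | .nat => fun M => ∃ n, M = numeral n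
  | .prod A B => fun M => ∃ V W, M = .pair V W ∧ Sem A V ∧ Sem B W
  | .arrow A B => fun M => ∃ x P, M = .abs x P ∧ ClosedTm M ∧
      ∀ V, ClosedTm V → IsValue V → Sem A V → TBarSem (Sem B) (subst x V P)
  | .narrow A F => fun M => ∃ x P, M = .abs x P ∧ ClosedTm M ∧
      ∀ V, ClosedTm V → IsValue V → TSem (FSem F) (subst x V P) → Sem A V
  | .ok => fun M => ClosedTm M ∧ IsValue M

/-- Typing formulas `M : A`. -/
structure Formula where
  tm : Tm
  ty : Ty
  deriving DecidableEq

/-- Make a formula. -/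
def fm (M : Tm) (A : Ty) : Formula := ⟨M, A⟩

/-- `x` does not occur free in any formula of `Γ`. -/
def FreshFor (x : ℕ) (Γ : Finset Formula) : Prop := ∀ φ ∈ Γ, x ∉ fv φ.tm

def IsArrowTy (A : Ty) : Prop :=
  (∃ B C, A = .arrow B C) ∨ (∃ B F, A = .narrow B F)

def IsProdTy (A : Ty) : Prop := ∃ B C, A = .prod B C

/-- Disjointness of types: one is `Nat` and the other is not, or one is an
arrow and the other is not, or one is a product and the other is not. -/
def Disj (A B : Ty) : Prop :=
  (A = .nat ∧ B ≠ .nat) ∨ (B = .nat ∧ A ≠ .nat) ∨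
  (IsArrowTy A ∧ ¬ IsArrowTy B) ∨ (IsArrowTy B ∧ ¬ IsArrowTy A) ∨
  (IsProdTy A ∧ ¬ IsProdTy B) ∨ (IsProdTy B ∧ ¬ IsProdTy A)

/-- The two-sided type system (including the `Ok` rules). -/
inductive Der : Finset Formula → Finset Formula → Prop
  | id (Γ Δ : Finset Formula) (x : ℕ) (A : Ty) :
      Der (insert (fm (.var x) A) Γ) (insert (fm (.var x) A) Δ)
  | dis {Γ Δ : Finset Formula} {M : Tm} {A B : Ty} :
      Disj A B → Der Γ (insert (fm M B) Δ) → Der (insert (fm M A) Γ) Δ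
  | zeroR (Γ Δ : Finset Formula) : Der Γ (insert (fm .zero .nat) Δ)
  | succR {Γ Δ M} : Der Γ (insert (fm M .nat) Δ) → Der Γ (insert (fm (.succ M) .nat) Δ)
  | predR {Γ Δ M} : Der Γ (insert (fm M .nat) Δ) → Der Γ (insert (fm (.pred M) .nat) Δ)
  | letR {Γ Δ : Finset Formula} {x y : ℕ} {M N : Tm} {A B C : Ty} :
      Der Γ (insert (fm M (.prod B C)) Δ) →
      Der (insert (fm (.var x) B) (insert (fm (.var y) C) Γ)) (insert (fm N A) Δ) →
      FreshFor x Γ → FreshFor x Δ → FreshFor y Γ → FreshFor y Δ →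
      Der Γ (insert (fm (.lett x y M N) A) Δ)
  | appR {Γ Δ M N A B} :
      Der Γ (insert (fm M (.arrow B A)) Δ) → Der Γ (insert (fm N B) Δ) →
      Der Γ (insert (fm (.app M N) A) Δ)
  | pairR {Γ Δ M N A B} :
      Der Γ (insert (fm M A) Δ) → Der Γ (insert (fm N B) Δ) →
      Der Γ (insert (fm (.pair M N) (.prod A B)) Δ)
  | absR {Γ Δ : Finset Formula} {x : ℕ} {M : Tm} {A B : Ty} :
      Der (insert (fm (.var x) B) Γ) (insert (fm M A) Δ) →
      FreshFor x Γ → FreshFor x Δ →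
      Der Γ (insert (fm (.abs x M) (.arrow B A)) Δ)
  | abnR {Γ Δ : Finset Formula} {x : ℕ} {M : Tm} {B : Ty} {F : FTy} :
      Der (insert (fm M F.toTy) Γ) (insert (fm (.var x) B) Δ) →
      FreshFor x Γ → FreshFor x Δ →
      Der Γ (insert (fm (.abs x M) (.narrow B F)) Δ)
  | fixR {Γ Δ : Finset Formula} {x : ℕ} {M : Tm} {A : Ty} :
      Der (insert (fm (.var x) A) Γ) (insert (fm M A) Δ) →
      FreshFor x Γ → FreshFor x Δ →
      Der Γ (insert (fm (.fix x M) A) Δ)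
  | ifzR {Γ Δ M N P A} :
      Der Γ (insert (fm M .nat) Δ) → Der Γ (insert (fm N A) Δ) →
      Der Γ (insert (fm P A) Δ) →
      Der Γ (insert (fm (.ifz M N P) A) Δ)
  | succL {Γ Δ M} : Der (insert (fm M .nat) Γ) Δ → Der (insert (fm (.succ M) .nat) Γ) Δ
  | predL {Γ Δ M} : Der (insert (fm M .nat) Γ) Δ → Der (insert (fm (.pred M) .nat) Γ) Δ
  | appL {Γ Δ : Finset Formula} {M N : Tm} {B : Ty} {A : FTy} :
      Der Γ (insert (fm M (.narrow B A)) Δ) → Der (insert (fm N B) Γ) Δ →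
      Der (insert (fm (.app M N) A.toTy) Γ) Δ
  | pairL1 {Γ Δ M1 M2 A1 A2} : Der (insert (fm M1 A1) Γ) Δ →
      Der (insert (fm (.pair M1 M2) (.prod A1 A2)) Γ) Δ
  | pairL2 {Γ Δ M1 M2 A1 A2} : Der (insert (fm M2 A2) Γ) Δ →
      Der (insert (fm (.pair M1 M2) (.prod A1 A2)) Γ) Δ
  | letL1 {Γ Δ : Finset Formula} {x y : ℕ} {M N : Tm} {A : Ty} :
      Der (insert (fm N A) Γ) Δ →
      FreshFor x Γ → FreshFor x Δ → FreshFor y Γ → FreshFor y Δ →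
      Der (insert (fm (.lett x y M N) A) Γ) Δ
  | letL2 {Γ Δ : Finset Formula} {x y : ℕ} {M N : Tm} {A B1 B2 : Ty} :
      Der (insert (fm M (.prod B1 B2)) Γ) Δ →
      Der (insert (fm N A) Γ) (insert (fm (.var x) B1) Δ) →
      Der (insert (fm N A) Γ) (insert (fm (.var y) B2) Δ) →
      FreshFor x Γ → FreshFor x Δ → FreshFor y Γ → FreshFor y Δ →
      Der (insert (fm (.lett x y M N) A) Γ) Δ
  | ifzL1 {Γ Δ M N P A} : Der (insert (fm M .nat) Γ) Δ →
      Der (insert (fm (.ifz M N P) A) Γ) Δ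
  | ifzL2 {Γ Δ M N P A} : Der (insert (fm N A) Γ) Δ → Der (insert (fm P A) Γ) Δ →
      Der (insert (fm (.ifz M N P) A) Γ) Δ
  | okVarR (Γ Δ : Finset Formula) (x : ℕ) : Der Γ (insert (fm (.var x) .ok) Δ)
  | okL {Γ Δ M A} : Der (insert (fm M .ok) Γ) Δ → Der (insert (fm M A) Γ) Δ
  | okR {Γ Δ M A} : Der Γ (insert (fm M A) Δ) → Der Γ (insert (fm M .ok) Δ)
  | okApL1 {Γ Δ M N A} : Der (insert (fm M (.narrow .ok A)) Γ) Δ →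
      Der (insert (fm (.app M N) .ok) Γ) Δ
  | okApL2 {Γ Δ M N} : Der (insert (fm N .ok) Γ) Δ → Der (insert (fm (.app M N) .ok) Γ) Δ
  | okSL {Γ Δ M} : Der (insert (fm M .nat) Γ) Δ → Der (insert (fm (.succ M) .ok) Γ) Δ
  | okPL {Γ Δ M} : Der (insert (fm M .nat) Γ) Δ → Der (insert (fm (.pred M) .ok) Γ) Δ
  | okPrL1 {Γ Δ M1 M2} : Der (insert (fm M1 .ok) Γ) Δ →
      Der (insert (fm (.pair M1 M2) .ok) Γ) Δ
  | okPrL2 {Γ Δ M1 M2} : Der (insert (fm M2 .ok) Γ) Δ →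
      Der (insert (fm (.pair M1 M2) .ok) Γ) Δ

/-- Simultaneous substitution by a valuation (total substitution); suitable
since valuations map variables to closed terms. -/
def msubst (θ : ℕ → Tm) : Tm → Tm
  | .var y => θ y
  | .zero => .zero
  | .succ M => .succ (msubst θ M)
  | .pred M => .pred (msubst θ M)
  | .ifz M P Q => .ifz (msubst θ M) (msubst θ P) (msubst θ Q)
  | .abs y M => .abs y (msubst (Function.update θ y (.var y)) M)
  | .app M P => .app (msubst θ M) (msubst θ P)
  | .fix y M => .fix y (msubst (Function.update θ y (.var y)) M)
  | .pair M P => .pair (msubst θ M) (msubst θ P)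
  | .lett y z M P =>
      .lett y z (msubst θ M)
        (msubst (Function.update (Function.update θ y (.var y)) z (.var z)) P)

/-- A valuation: a substitution by closed terms. -/
def ClosedVal (θ : ℕ → Tm) : Prop := ∀ x, ClosedTm (θ x)

/-- `θ` satisfies `M : A` on the left: `Mθ ∈ T⟦A⟧`. -/
def SatL (θ : ℕ → Tm) (φ : Formula) : Prop := TSem (Sem φ.ty) (msubst θ φ.tm)

/-- `θ` satisfies `M : A` on the right: `Mθ ∈ T̄⟦A⟧`. -/
def SatR (θ : ℕ → Tm) (φ : Formula) : Prop := TBarSem (Sem φ.ty) (msubst θ φ.tm)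

/-- Truth of a judgement: `Γ ⊨ Δ`. -/
def Models (Γ Δ : Finset Formula) : Prop :=
  ∀ θ : ℕ → Tm, ClosedVal θ → (∀ φ ∈ Γ, SatL θ φ) → ∃ φ ∈ Δ, SatR θ φ


/-- `M` gets stuck: it reduces to a normal form that is not a value. -/
def GetsStuck (M : Tm) : Prop := ∃ R, Steps M R ∧ Stuck R

theorem numeral_injective : Function.Injective numeral := by
  intro m n h
  induction m generalizing n with
  | zero => cases n <;> simp_all [numeral]
  | succ m ih =>
    cases n with
    | zero => simp [numeral] at h
    | succ n => simp only [numeral, Tm.succ.injEq] at h; rw [ih h]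

theorem IsValue.not_step {V V' : Tm} (hV : IsValue V) : ¬ Step V V' := by
  induction hV generalizing V' with
  | num n =>
    induction n generalizing V' with
    | zero => rintro ⟨⟩
    | succ n ih => intro h; cases h with | succ_ctx h => exact ih h
  | pair _ _ ihV ihW =>
    intro h
    cases h with
    | pair_left h => exact ihV h
    | pair_right _ h => exact ihW h
  | _ => rintro ⟨⟩

theorem IsValue.normalForm {V : Tm} (hV : IsValue V) : NormalForm V :=
  fun ⟨_, h⟩ => hV.not_step h

theorem Step.deterministic {A B C : Tm} (h₁ : Step A B) (h₂ : Step A C) : B = C := by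
  induction h₁ generalizing C with
  | ifz_succ =>
    generalize hq : numeral (_ + 1) = q at h₂
    cases h₂ with
    | ifz_zero => exact absurd (numeral_injective hq) (by omega)
    | ifz_succ => rfl
    | ifz_ctx h => subst hq; exact absurd h (IsValue.num _).not_step
  | @pred_succ n =>
    generalize hq : numeral (n + 1) = q at h₂
    cases h₂ with
    | pred_zero => exact absurd (numeral_injective hq) (by omega)
    | pred_succ => exact (Nat.succ_injective (numeral_injective hq)).symm ▸ rfl
    | pred_ctx h => subst hq; exact absurd h (IsValue.num _).not_step
  | _ =>
    -- two different rules only overlap when one of them would step inside a value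
    cases h₂ <;> first
      | rfl
      | (congr 1; solve_by_elim)
      | (exfalso; solve_by_elim [IsValue.not_step, IsValue.abs, IsValue.pair, IsValue.num])
      | exact absurd ‹Step (numeral _) _› (IsValue.num _).not_step

theorem fv_numeral (n : ℕ) : fv (numeral n) = ∅ := by
  induction n <;> simp_all [numeral, fv]

theorem mem_fv_subst {x a : ℕ} {N M : Tm} (h : a ∈ fv (subst x N M)) :
    a ∈ fv M ∧ a ≠ x ∨ a ∈ fv N := by
  induction M <;> simp only [subst, fv] at h ⊢ <;> (try split_ifs at h) <;>
    (try simp only [fv] at h) <;> grind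

theorem Step.fv_subset {A B : Tm} (h : Step A B) : fv B ⊆ fv A := by
  induction h <;> intro a ha <;> simp only [fv, fv_numeral] at ha ⊢
  case lett_beta =>
    rcases mem_fv_subst ha with ⟨ha, _⟩ | _
    · have := mem_fv_subst ha; grind
    · grind
  case fix_step => have := mem_fv_subst ha; simp only [fv] at this; grind
  case beta => have := mem_fv_subst ha; grind
  all_goals grind

theorem ClosedTm.of_steps {A B : Tm} (hA : ClosedTm A) (h : Steps A B) : ClosedTm B := by
  induction h with
  | refl => exact hA
  | tail _ hstep ih => exact Finset.subset_empty.mp (ih ▸ hstep.fv_subset)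

theorem subst_eq_self_of_notMem_fv {x : ℕ} {M : Tm} (hx : x ∉ fv M) (N : Tm) :
    subst x N M = M := by
  induction M <;> simp only [subst, fv] at * <;> grind

theorem ClosedTm.subst_eq_self {M : Tm} (hM : ClosedTm M) (x : ℕ) (N : Tm) : subst x N M = M :=
  subst_eq_self_of_notMem_fv (by simp [show fv M = ∅ from hM]) N

theorem NormalForm.eq_of_steps {R W : Tm} (hR : NormalForm R) (h : Steps R W) : R = W := by
  rcases h.cases_head with rfl | ⟨_, hstep, _⟩
  · rfl
  · exact absurd ⟨_, hstep⟩ hR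

theorem Steps.eq_of_normalForm {A R W : Tm} (hR : Steps A R) (hW : Steps A W)
    (nR : NormalForm R) (nW : NormalForm W) : R = W := by
  have hdet : Relator.RightUnique Step := fun _ _ _ => Step.deterministic
  rcases Relation.ReflTransGen.total_of_right_unique hdet hR hW with h | h
  · exact nR.eq_of_steps h
  · exact (nW.eq_of_steps h).symm

theorem Steps.succ {M M' : Tm} (h : Steps M M') : Steps (.succ M) (.succ M') :=
  h.lift Tm.succ fun _ _ => Step.succ_ctx

theorem Steps.pred {M M' : Tm} (h : Steps M M') : Steps (.pred M) (.pred M') :=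
  h.lift Tm.pred fun _ _ => Step.pred_ctx

theorem Steps.pair_left {M M' N : Tm} (h : Steps M M') : Steps (.pair M N) (.pair M' N) :=
  h.lift (Tm.pair · N) fun _ _ => Step.pair_left

theorem Steps.pair_right {V N N' : Tm} (hV : IsValue V) (h : Steps N N') :
    Steps (.pair V N) (.pair V N') :=
  h.lift (Tm.pair V) fun _ _ => Step.pair_right hV

theorem Steps.lett {x y : ℕ} {M M' N : Tm} (h : Steps M M') :
    Steps (.lett x y M N) (.lett x y M' N) :=
  h.lift (Tm.lett x y · N) fun _ _ => Step.lett_ctx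

theorem Steps.ifz {M M' N P : Tm} (h : Steps M M') : Steps (.ifz M N P) (.ifz M' N P) :=
  h.lift (Tm.ifz · N P) fun _ _ => Step.ifz_ctx

theorem Steps.app_left {M M' N : Tm} (h : Steps M M') : Steps (.app M N) (.app M' N) :=
  h.lift (Tm.app · N) fun _ _ => Step.app_left

theorem Steps.app_right {x : ℕ} {M N N' : Tm} (h : Steps N N') :
    Steps (.app (.abs x M) N) (.app (.abs x M) N') :=
  h.lift (Tm.app (.abs x M)) fun _ _ => Step.app_right

inductive ReplaceReducts (P N : Tm) : Tm → Tm → Prop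
  | base {Q : Tm} : Steps P Q → ReplaceReducts P N Q N
  | var (x : ℕ) : ReplaceReducts P N (.var x) (.var x)
  | zero : ReplaceReducts P N .zero .zero
  | succ {M M'} : ReplaceReducts P N M M' → ReplaceReducts P N (.succ M) (.succ M')
  | pred {M M'} : ReplaceReducts P N M M' → ReplaceReducts P N (.pred M) (.pred M')
  | ifz {M M' Q Q' R R'} : ReplaceReducts P N M M' → ReplaceReducts P N Q Q' →
      ReplaceReducts P N R R' → ReplaceReducts P N (.ifz M Q R) (.ifz M' Q' R')
  | abs (x : ℕ) {M M'} : ReplaceReducts P N M M' → ReplaceReducts P N (.abs x M) (.abs x M')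
  | app {M M' Q Q'} : ReplaceReducts P N M M' → ReplaceReducts P N Q Q' →
      ReplaceReducts P N (.app M Q) (.app M' Q')
  | fix (x : ℕ) {M M'} : ReplaceReducts P N M M' → ReplaceReducts P N (.fix x M) (.fix x M')
  | pair {M M' Q Q'} : ReplaceReducts P N M M' → ReplaceReducts P N Q Q' →
      ReplaceReducts P N (.pair M Q) (.pair M' Q')
  | lett (x y : ℕ) {M M' Q Q'} : ReplaceReducts P N M M' → ReplaceReducts P N Q Q' →
      ReplaceReducts P N (.lett x y M Q) (.lett x y M' Q')

namespace ReplaceReducts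

variable {P N : Tm}

theorem refl (M : Tm) : ReplaceReducts P N M M := by
  induction M <;> constructor <;> assumption

theorem subst (hP : ClosedTm P) (hN : ClosedTm N) (x : ℕ) {A A' M M' : Tm}
    (hA : ReplaceReducts P N A A') (hM : ReplaceReducts P N M M') :
    ReplaceReducts P N (PCF.subst x A M) (PCF.subst x A' M') := by
  induction hM with
  | base hQ =>
    rw [(hP.of_steps hQ).subst_eq_self, hN.subst_eq_self]
    exact base hQ
  | var y => simp only [PCF.subst]; split_ifs <;> first | assumption | constructor
  | abs | fix | lett => simp only [PCF.subst]; split_ifs <;> constructor <;> assumption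
  | _ => constructor <;> assumption

theorem steps_numeral (hle : RefBelow P N) {n : ℕ} {B : Tm}
    (h : ReplaceReducts P N (numeral n) B) : Steps B (numeral n) := by
  induction n generalizing B with
  | zero => cases h with
    | base hQ => exact hle _ hQ (IsValue.num 0).normalForm
    | zero => exact .refl
  | succ n ih => cases h with
    | base hQ => exact hle _ hQ (IsValue.num _).normalForm
    | succ h => exact (ih h).succ

theorem exists_value (hle : RefBelow P N) {V B : Tm} (hV : IsValue V)
    (h : ReplaceReducts P N V B) : ∃ W, Steps B W ∧ IsValue W ∧ ReplaceReducts P N V W := by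
  induction hV generalizing B with
  | num n => exact ⟨numeral n, steps_numeral hle h, IsValue.num n, refl _⟩
  | var x => cases h with
    | base hQ => exact ⟨_, hle _ hQ (IsValue.var x).normalForm, IsValue.var x, refl _⟩
    | var => exact ⟨_, .refl, IsValue.var x, refl _⟩
  | pair hV hW ihV ihW => cases h with
    | base hQ => exact ⟨_, hle _ hQ (hV.pair hW).normalForm, hV.pair hW, refl _⟩
    | pair hV' hW' =>
      obtain ⟨V', hsV, hV', hrV⟩ := ihV hV'
      obtain ⟨W', hsW, hW', hrW⟩ := ihW hW'
      exact ⟨.pair V' W', hsV.pair_left.trans (hsW.pair_right hV'), hV'.pair hW', hrV.pair hrW⟩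
  | abs x M => cases h with
    | base hQ => exact ⟨_, hle _ hQ (IsValue.abs x M).normalForm, IsValue.abs x M, refl _⟩
    | abs _ h => exact ⟨_, .refl, IsValue.abs x _, h.abs x⟩

theorem exists_pair (hle : RefBelow P N) {V W B : Tm} (hV : IsValue V) (hW : IsValue W)
    (h : ReplaceReducts P N (.pair V W) B) :
    ∃ V' W', IsValue V' ∧ IsValue W' ∧ Steps B (.pair V' W') ∧
      ReplaceReducts P N V V' ∧ ReplaceReducts P N W W' := by
  cases h with
  | base hQ => exact ⟨V, W, hV, hW, hle _ hQ (hV.pair hW).normalForm, refl _, refl _⟩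
  | pair hV' hW' =>
    obtain ⟨V', hsV, hV', hrV⟩ := exists_value hle hV hV'
    obtain ⟨W', hsW, hW', hrW⟩ := exists_value hle hW hW'
    exact ⟨V', W', hV', hW', hsV.pair_left.trans (hsW.pair_right hV'), hrV, hrW⟩

theorem exists_abs (hle : RefBelow P N) {x : ℕ} {M B : Tm}
    (h : ReplaceReducts P N (.abs x M) B) :
    ∃ M', Steps B (.abs x M') ∧ ReplaceReducts P N M M' := by
  cases h with
  | base hQ => exact ⟨M, hle _ hQ (IsValue.abs x M).normalForm, refl _⟩
  | abs _ h => exact ⟨_, .refl, h⟩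

theorem simulate_step (hP : ClosedTm P) (hN : ClosedTm N) (hle : RefBelow P N) {A A' B : Tm}
    (h : ReplaceReducts P N A B) (hstep : Step A A') :
    ∃ B', Steps B B' ∧ ReplaceReducts P N A' B' := by
  induction h generalizing A' with
  | base hQ => exact ⟨N, .refl, base (hQ.tail hstep)⟩
  | var | zero | abs => cases hstep
  | succ _ ih =>
    cases hstep with
    | succ_ctx hstep => obtain ⟨B', hs, hr⟩ := ih hstep; exact ⟨_, hs.succ, hr.succ⟩
  | pred h ih =>
    cases hstep with
    | pred_zero => exact ⟨_, h.steps_numeral hle |>.pred |>.tail .pred_zero, refl _⟩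
    | pred_succ => exact ⟨_, h.steps_numeral hle |>.pred |>.tail .pred_succ, refl _⟩
    | pred_ctx hstep => obtain ⟨B', hs, hr⟩ := ih hstep; exact ⟨_, hs.pred, hr.pred⟩
  | ifz h hQ hR ih =>
    cases hstep with
    | ifz_zero => exact ⟨_, h.steps_numeral (n := 0) hle |>.ifz |>.tail .ifz_zero, hQ⟩
    | ifz_succ => exact ⟨_, h.steps_numeral hle |>.ifz |>.tail .ifz_succ, hR⟩
    | ifz_ctx hstep => obtain ⟨B', hs, hr⟩ := ih hstep; exact ⟨_, hs.ifz, hr.ifz hQ hR⟩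
  | fix x h =>
    cases hstep with | fix_step => exact ⟨_, .single .fix_step, subst hP hN x (h.fix x) h⟩
  | pair hM hQ ihM ihQ =>
    cases hstep with
    | pair_left hstep =>
      obtain ⟨B', hs, hr⟩ := ihM hstep
      exact ⟨_, hs.pair_left, hr.pair hQ⟩
    | pair_right hV hstep =>
      obtain ⟨V', hsV, hV', hrV⟩ := exists_value hle hV hM
      obtain ⟨B', hs, hr⟩ := ihQ hstep
      exact ⟨_, hsV.pair_left.trans (hs.pair_right hV'), hrV.pair hr⟩
  | lett x y hM hQ ihM =>
    cases hstep with
    | lett_beta hV hW =>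
      obtain ⟨V', W', hV', hW', hs, hrV, hrW⟩ := exists_pair hle hV hW hM
      exact ⟨_, hs.lett.tail (.lett_beta hV' hW'), subst hP hN _ hrW (subst hP hN _ hrV hQ)⟩
    | lett_ctx hstep => obtain ⟨B', hs, hr⟩ := ihM hstep; exact ⟨_, hs.lett, hr.lett x y hQ⟩
  | app hM hQ ihM ihQ =>
    cases hstep with
    | beta hV =>
      obtain ⟨M', hsM, hrM⟩ := exists_abs hle hM
      obtain ⟨V', hsV, hV', hrV⟩ := exists_value hle hV hQ
      exact ⟨_, (hsM.app_left.trans hsV.app_right).tail (.beta hV'), subst hP hN _ hrV hrM⟩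
    | app_right hstep =>
      obtain ⟨M', hsM, hrM⟩ := exists_abs hle hM
      obtain ⟨B', hs, hr⟩ := ihQ hstep
      exact ⟨_, hsM.app_left.trans hs.app_right, (hrM.abs _).app hr⟩
    | app_left hstep => obtain ⟨B', hs, hr⟩ := ihM hstep; exact ⟨_, hs.app_left, hr.app hQ⟩

theorem simulate_steps (hP : ClosedTm P) (hN : ClosedTm N) (hle : RefBelow P N) {A A' B : Tm}
    (h : ReplaceReducts P N A B) (hsteps : Steps A A') :
    ∃ B', Steps B B' ∧ ReplaceReducts P N A' B' := by
  induction hsteps with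
  | refl => exact ⟨B, .refl, h⟩
  | tail _ hstep ih =>
    obtain ⟨B', hs, hr⟩ := ih
    obtain ⟨B'', hs', hr'⟩ := hr.simulate_step hP hN hle hstep
    exact ⟨B'', hs.trans hs', hr'⟩

theorem evaluates (hP : ClosedTm P) (hN : ClosedTm N) (hle : RefBelow P N) {A B : Tm}
    (h : ReplaceReducts P N A B) (hA : Evaluates A) : Evaluates B := by
  obtain ⟨V, hsV, hV⟩ := hA
  obtain ⟨B', hsB, hr⟩ := h.simulate_steps hP hN hle hsV
  obtain ⟨W, hsW, hW, -⟩ := hr.exists_value hle hV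
  exact ⟨W, hsB.trans hsW, hW⟩

end ReplaceReducts

theorem Evaluates.subst_of_refBelow {P N : Tm} (hP : ClosedTm P) (hN : ClosedTm N)
    (hle : RefBelow P N) {z : ℕ} {M : Tm} (h : Evaluates (subst z P M)) :
    Evaluates (subst z N M) :=
  ((ReplaceReducts.base .refl).subst hP hN z (.refl M)).evaluates hP hN hle h

theorem GetsStuck.not_evaluates {M : Tm} (h : GetsStuck M) : ¬ Evaluates M := by
  rintro ⟨V, hsV, hV⟩
  obtain ⟨R, hsR, hnf, hnv⟩ := h
  exact hnv (hsR.eq_of_normalForm hsV hnf hV.normalForm ▸ hV)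

theorem diverges_or_getsStuck_or_evaluates (M : Tm) :
    Diverges M ∨ GetsStuck M ∨ Evaluates M := by
  by_cases hdiv : Diverges M
  · exact .inl hdiv
  obtain ⟨R, hsR, hnf⟩ := not_not.mp hdiv
  by_cases hR : IsValue R
  · exact .inr (.inr ⟨R, hsR, hR⟩)
  · exact .inr (.inl ⟨R, hsR, hnf, hR⟩)

/-- Stuckness modulo substitution. -/
theorem stuck_under_subst (M N P : Tm) (z : ℕ)
    (hN : ClosedTm N) (hP : ClosedTm P) (hle : RefBelow P N)
    (h : GetsStuck (subst z N M)) :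
    Diverges (subst z P M) ∨ GetsStuck (subst z P M) := by
  rcases diverges_or_getsStuck_or_evaluates (subst z P M) with hdiv | hstuck | heval
  · exact .inl hdiv
  · exact .inr hstuck
  · exact absurd (heval.subst_of_refBelow hP hN hle) h.not_evaluates

end PCF
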